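/- If W is a generating function of a monotone map Φ ∈ 𝒟_L(S,ω), then W is constant on each connected component of ∂S, and FLUX(Φ) = (1/2)(W|_{ℝ×{π}} − W|_{ℝ×{0}}). -/

import Mathlib

open Real intervalIntegral

noncomputable section

/-- Partial derivative in the first variable. -/
def pd1 (f : ℝ → ℝ → ℝ) (x y : ℝ) : ℝ := deriv (fun t => f t y) x

/-- Partial derivative in the second variable. -/
def pd2 (f : ℝ → ℝ → ℝ) (x y : ℝ) : ℝ := deriv (fun t => f x t) y

/-- The strip `S = ℝ × [0,π]`. -/
def strip : Set (ℝ × ℝ) := Set.univ ×ˢ Set.Icc (0:ℝ) π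

/-- An element `Φ = (X,Y)` of the group `𝒟_L(S,ω)`: a diffeomorphism of the strip
`S = ℝ × [0,π]` (smooth up to the boundary, i.e. extending to a smooth map of the plane)
which commutes with the translation `(x,y) ↦ (x+L,y)`, maps each boundary component of
`S` into itself, and preserves the two-form `ω = sin y dx ∧ dy` (expressed through the
Jacobian identity `sin (Y(x,y)) · det DΦ(x,y) = sin y`). -/
structure StripMap (L : ℝ) where
  X : ℝ → ℝ → ℝ
  Y : ℝ → ℝ → ℝ
  smooth : ContDiff ℝ (⊤ : ℕ∞) (fun p : ℝ × ℝ => (X p.1 p.2, Y p.1 p.2))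
  mapsStrip : ∀ (x : ℝ), ∀ y ∈ Set.Icc (0:ℝ) π, Y x y ∈ Set.Icc (0:ℝ) π
  bijOn : Set.BijOn (fun p : ℝ × ℝ => (X p.1 p.2, Y p.1 p.2)) strip strip
  invSmooth : ∃ F : ℝ × ℝ → ℝ × ℝ, ContDiff ℝ (⊤ : ℕ∞) F ∧
      ∀ p ∈ strip, F (X p.1 p.2, Y p.1 p.2) = p
  periodicX : ∀ (x : ℝ), ∀ y ∈ Set.Icc (0:ℝ) π, X (x + L) y = X x y + L
  periodicY : ∀ (x : ℝ), ∀ y ∈ Set.Icc (0:ℝ) π, Y (x + L) y = Y x y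
  bdryLow : ∀ x : ℝ, Y x 0 = 0
  bdryHigh : ∀ x : ℝ, Y x π = π
  areaPres : ∀ (x : ℝ), ∀ y ∈ Set.Icc (0:ℝ) π,
      Real.sin (Y x y) * (pd1 X x y * pd2 Y x y - pd2 X x y * pd1 Y x y) = Real.sin y

/-- The flux of `Φ ∈ 𝒟_L(S,ω)`:
`FLUX(Φ) = (1/(2L)) ∫∫_{[0,L]×[0,π]} (X(x,y) − x) sin y dx dy`. -/
def flux (L : ℝ) (Φ : StripMap L) : ℝ :=
  (1 / (2 * L)) * ∫ x in (0:ℝ)..L, ∫ y in (0:ℝ)..π, (Φ.X x y - x) * Real.sin y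

/-- `Φ = (X,Y) ∈ 𝒟_L(S,ω)` is monotone if `∂Y/∂y > 0` everywhere on `S`. -/
def IsMonotone (L : ℝ) (Φ : StripMap L) : Prop :=
  ∀ (x : ℝ), ∀ y ∈ Set.Icc (0:ℝ) π, 0 < pd2 Φ.Y x y

/-- `W` is a generating function of the monotone map `Φ = (X,Y) ∈ 𝒟_L(S,ω)`:
`W` is smooth, `L`-periodic in the first variable, and
`(X−x) sin Y = D₂W(x,Y)`, `cos Y − cos y = D₁W(x,Y)`. -/
def IsGenFun (L : ℝ) (Φ : StripMap L) (W : ℝ → ℝ → ℝ) : Prop :=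
  ContDiff ℝ (⊤ : ℕ∞) (fun p : ℝ × ℝ => W p.1 p.2) ∧
  (∀ (x : ℝ), ∀ y ∈ Set.Icc (0:ℝ) π, W (x + L) y = W x y) ∧
  (∀ (x : ℝ), ∀ y ∈ Set.Icc (0:ℝ) π,
    (Φ.X x y - x) * Real.sin (Φ.Y x y) = pd2 W x (Φ.Y x y) ∧
    Real.cos (Φ.Y x y) - Real.cos y = pd1 W x (Φ.Y x y))

/-! ### Auxiliary lemmas on partial derivatives -/

/-- Uncurried version of a two-variable function. -/
def unc (f : ℝ → ℝ → ℝ) : ℝ × ℝ → ℝ := fun p => f p.1 p.2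

lemma pd1_eq_fderiv {f : ℝ → ℝ → ℝ} (hf : ContDiff ℝ (⊤ : ℕ∞) (unc f)) (x y : ℝ) :
    pd1 f x y = fderiv ℝ (unc f) (x, y) (1, 0) := by
  have h1 : HasDerivAt (fun t : ℝ => (t, y)) ((1:ℝ), (0:ℝ)) x :=
    HasDerivAt.prodMk (hasDerivAt_id x) (hasDerivAt_const x y)
  have h2 : HasFDerivAt (unc f) (fderiv ℝ (unc f) (x, y)) (x, y) :=
    (hf.differentiable (by simp) (x, y)).hasFDerivAt
  exact (h2.comp_hasDerivAt x h1).deriv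

lemma pd2_eq_fderiv {f : ℝ → ℝ → ℝ} (hf : ContDiff ℝ (⊤ : ℕ∞) (unc f)) (x y : ℝ) :
    pd2 f x y = fderiv ℝ (unc f) (x, y) (0, 1) := by
  have h1 : HasDerivAt (fun t : ℝ => (x, t)) ((0:ℝ), (1:ℝ)) y :=
    HasDerivAt.prodMk (hasDerivAt_const y x) (hasDerivAt_id y)
  have h2 : HasFDerivAt (unc f) (fderiv ℝ (unc f) (x, y)) (x, y) :=
    (hf.differentiable (by simp) (x, y)).hasFDerivAt
  exact (h2.comp_hasDerivAt y h1).deriv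

lemma hasDerivAt_pd1 {f : ℝ → ℝ → ℝ} (hf : ContDiff ℝ (⊤ : ℕ∞) (unc f)) (x y : ℝ) :
    HasDerivAt (fun t => f t y) (pd1 f x y) x := by
  have h1 : HasDerivAt (fun t : ℝ => (t, y)) ((1:ℝ), (0:ℝ)) x :=
    HasDerivAt.prodMk (hasDerivAt_id x) (hasDerivAt_const x y)
  have h2 : HasFDerivAt (unc f) (fderiv ℝ (unc f) (x, y)) (x, y) :=
    (hf.differentiable (by simp) (x, y)).hasFDerivAt
  have h3 : HasDerivAt (fun t => f t y) (fderiv ℝ (unc f) (x, y) (1, 0)) x :=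
    by have := h2.comp_hasDerivAt x h1; exact this
  rw [show pd1 f x y = deriv (fun t => f t y) x from rfl, h3.deriv]
  exact h3

lemma hasDerivAt_pd2 {f : ℝ → ℝ → ℝ} (hf : ContDiff ℝ (⊤ : ℕ∞) (unc f)) (x y : ℝ) :
    HasDerivAt (fun t => f x t) (pd2 f x y) y := by
  have h1 : HasDerivAt (fun t : ℝ => (x, t)) ((0:ℝ), (1:ℝ)) y :=
    HasDerivAt.prodMk (hasDerivAt_const y x) (hasDerivAt_id y)
  have h2 : HasFDerivAt (unc f) (fderiv ℝ (unc f) (x, y)) (x, y) :=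
    (hf.differentiable (by simp) (x, y)).hasFDerivAt
  have h3 : HasDerivAt (fun t => f x t) (fderiv ℝ (unc f) (x, y) (0, 1)) y :=
    h2.comp_hasDerivAt y h1
  rw [show pd2 f x y = deriv (fun t => f x t) y from rfl, h3.deriv]
  exact h3

lemma contDiff_pd1 {f : ℝ → ℝ → ℝ} (hf : ContDiff ℝ (⊤ : ℕ∞) (unc f)) :
    ContDiff ℝ (⊤ : ℕ∞) (unc (pd1 f)) := by
  have : unc (pd1 f) = fun p : ℝ × ℝ => fderiv ℝ (unc f) p (1, 0) := by
    funext p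
    exact pd1_eq_fderiv hf p.1 p.2
  rw [this]
  exact (hf.fderiv_right (by simp)).clm_apply contDiff_const

lemma contDiff_pd2 {f : ℝ → ℝ → ℝ} (hf : ContDiff ℝ (⊤ : ℕ∞) (unc f)) :
    ContDiff ℝ (⊤ : ℕ∞) (unc (pd2 f)) := by
  have : unc (pd2 f) = fun p : ℝ × ℝ => fderiv ℝ (unc f) p (0, 1) := by
    funext p
    exact pd2_eq_fderiv hf p.1 p.2
  rw [this]
  exact (hf.fderiv_right (by simp)).clm_apply contDiff_const

lemma clairaut {f : ℝ → ℝ → ℝ} (hf : ContDiff ℝ (⊤ : ℕ∞) (unc f)) (x y : ℝ) :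
    pd1 (pd2 f) x y = pd2 (pd1 f) x y := by
  set G : ℝ × ℝ → (ℝ × ℝ) →L[ℝ] ℝ := fderiv ℝ (unc f) with hG
  have hGsm : ContDiff ℝ (⊤ : ℕ∞) G := hf.fderiv_right (by simp)
  have hGd : HasFDerivAt G (fderiv ℝ G (x, y)) (x, y) :=
    (hGsm.differentiable (by simp) (x, y)).hasFDerivAt
  set f'' := fderiv ℝ G (x, y) with hf''
  have key : ∀ v w : ℝ × ℝ, f'' v w = f'' w v :=
    second_derivative_symmetric (f := unc f)
      (fun p => (hf.differentiable (by simp) p).hasFDerivAt) hGd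
  have hu2 : unc (pd2 f) = fun p : ℝ × ℝ =>
      (ContinuousLinearMap.apply ℝ ℝ ((0:ℝ), (1:ℝ))) (G p) := by
    funext p
    exact pd2_eq_fderiv hf p.1 p.2
  have hu1 : unc (pd1 f) = fun p : ℝ × ℝ =>
      (ContinuousLinearMap.apply ℝ ℝ ((1:ℝ), (0:ℝ))) (G p) := by
    funext p
    exact pd1_eq_fderiv hf p.1 p.2
  have hc2 : HasFDerivAt (unc (pd2 f))
      ((ContinuousLinearMap.apply ℝ ℝ ((0:ℝ), (1:ℝ))).comp f'') (x, y) := by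
    rw [hu2]
    exact ((ContinuousLinearMap.apply ℝ ℝ ((0:ℝ), (1:ℝ))).hasFDerivAt).comp (x, y) hGd
  have hc1 : HasFDerivAt (unc (pd1 f))
      ((ContinuousLinearMap.apply ℝ ℝ ((1:ℝ), (0:ℝ))).comp f'') (x, y) := by
    rw [hu1]
    exact ((ContinuousLinearMap.apply ℝ ℝ ((1:ℝ), (0:ℝ))).hasFDerivAt).comp (x, y) hGd
  have e1 : pd1 (pd2 f) x y = f'' (1, 0) (0, 1) := by
    rw [pd1_eq_fderiv (contDiff_pd2 hf) x y, hc2.fderiv]; rfl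
  have e2 : pd2 (pd1 f) x y = f'' (0, 1) (1, 0) := by
    rw [pd2_eq_fderiv (contDiff_pd1 hf) x y, hc1.fderiv]; rfl
  rw [e1, e2, key]

lemma cont_slice1 {f : ℝ → ℝ → ℝ} (hf : Continuous (unc f)) (y : ℝ) :
    Continuous fun t => f t y :=
  hf.comp (continuous_id.prodMk continuous_const)

lemma cont_slice2 {f : ℝ → ℝ → ℝ} (hf : Continuous (unc f)) (x : ℝ) :
    Continuous fun t => f x t :=
  hf.comp (continuous_const.prodMk continuous_id)

/-! ### `P` and `Q` and their derivatives -/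

variable {L : ℝ} (Φ : StripMap L)

def Pf : ℝ → ℝ → ℝ := fun a b => (Φ.X a b - a) ^ 2 / 2

def Qf : ℝ → ℝ → ℝ := fun a b => -Real.cos (Φ.Y a b)

lemma hXs : ContDiff ℝ (⊤ : ℕ∞) (unc Φ.X) := contDiff_fst.comp Φ.smooth

lemma hYs : ContDiff ℝ (⊤ : ℕ∞) (unc Φ.Y) := contDiff_snd.comp Φ.smooth

lemma hPs : ContDiff ℝ (⊤ : ℕ∞) (unc (Pf Φ)) :=
  (((hXs Φ).sub contDiff_fst).pow 2).div_const 2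

lemma hQs : ContDiff ℝ (⊤ : ℕ∞) (unc (Qf Φ)) := ((hYs Φ).cos).neg

lemma hP1 (x y : ℝ) : pd1 (Pf Φ) x y = (Φ.X x y - x) * (pd1 Φ.X x y - 1) := by
  have h : HasDerivAt (fun t => Pf Φ t y)
      ((2 : ℕ) * (Φ.X x y - x) ^ 1 * (pd1 Φ.X x y - 1) / 2) x :=
    (((hasDerivAt_pd1 (hXs Φ) x y).sub (hasDerivAt_id x)).pow 2).div_const 2
  rw [show pd1 (Pf Φ) x y = deriv (fun t => Pf Φ t y) x from rfl, h.deriv]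
  ring

lemma hP2 (x y : ℝ) : pd2 (Pf Φ) x y = (Φ.X x y - x) * pd2 Φ.X x y := by
  have h : HasDerivAt (fun t => Pf Φ x t)
      ((2 : ℕ) * (Φ.X x y - x) ^ 1 * (pd2 Φ.X x y - 0) / 2) y :=
    (((hasDerivAt_pd2 (hXs Φ) x y).sub (hasDerivAt_const y x)).pow 2).div_const 2
  rw [show pd2 (Pf Φ) x y = deriv (fun t => Pf Φ x t) y from rfl, h.deriv]
  ring

lemma hQ1 (x y : ℝ) : pd1 (Qf Φ) x y = Real.sin (Φ.Y x y) * pd1 Φ.Y x y := by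
  have h : HasDerivAt (fun t => Qf Φ t y)
      (-(-Real.sin (Φ.Y x y) * pd1 Φ.Y x y)) x :=
    ((hasDerivAt_pd1 (hYs Φ) x y).cos).neg
  rw [show pd1 (Qf Φ) x y = deriv (fun t => Qf Φ t y) x from rfl, h.deriv]
  ring

lemma hQ2 (x y : ℝ) : pd2 (Qf Φ) x y = Real.sin (Φ.Y x y) * pd2 Φ.Y x y := by
  have h : HasDerivAt (fun t => Qf Φ x t)
      (-(-Real.sin (Φ.Y x y) * pd2 Φ.Y x y)) y :=
    ((hasDerivAt_pd2 (hYs Φ) x y).cos).neg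
  rw [show pd2 (Qf Φ) x y = deriv (fun t => Qf Φ x t) y from rfl, h.deriv]
  ring

/-- The key pointwise identity on the strip. -/
lemma pointwise_identity (x : ℝ) {y : ℝ} (hy : y ∈ Set.Icc (0:ℝ) π) :
    (Φ.X x y - x) * Real.sin y =
      (Φ.X x y - x) * Real.sin (Φ.Y x y) * pd2 Φ.Y x y +
      (pd1 (Pf Φ) x y * pd2 (Qf Φ) x y - pd2 (Pf Φ) x y * pd1 (Qf Φ) x y) := by
  rw [hP1, hP2, hQ1, hQ2]
  linear_combination (x - Φ.X x y) * (Φ.areaPres x y hy)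

/-- Proposition 1.10: a generating function `W` of a monotone `Φ ∈ 𝒟_L(S,ω)` is constant
on each connected component of `∂S`, and
`FLUX(Φ) = (1/2)(W|_{ℝ×{π}} − W|_{ℝ×{0}})`. -/
theorem genfun_flux (L : ℝ) (hL : 0 < L) (Φ : StripMap L) (hmono : IsMonotone L Φ)
    (W : ℝ → ℝ → ℝ) (hW : IsGenFun L Φ W) :
    ∃ c0 cπ : ℝ, (∀ x : ℝ, W x 0 = c0) ∧ (∀ x : ℝ, W x π = cπ) ∧
      flux L Φ = (1 / 2) * (cπ - c0) := by
  obtain ⟨hWs, hWper, hWgen⟩ := hW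
  have hWsm : ContDiff ℝ (⊤ : ℕ∞) (unc W) := hWs
  -- Constancy on the boundary
  have hlow : ∀ x : ℝ, W x 0 = W 0 0 := by
    have hd : Differentiable ℝ (fun t => W t 0) :=
      fun x => (hasDerivAt_pd1 hWsm x 0).differentiableAt
    have hz : ∀ x, deriv (fun t => W t 0) x = 0 := by
      intro x
      have h := (hWgen x 0 ⟨le_rfl, pi_pos.le⟩).2
      rw [Φ.bdryLow x] at h
      simpa [pd1] using h.symm
    exact fun x => is_const_of_deriv_eq_zero hd hz x 0
  have hhigh : ∀ x : ℝ, W x π = W 0 π := by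
    have hd : Differentiable ℝ (fun t => W t π) :=
      fun x => (hasDerivAt_pd1 hWsm x π).differentiableAt
    have hz : ∀ x, deriv (fun t => W t π) x = 0 := by
      intro x
      have h := (hWgen x π ⟨pi_pos.le, le_rfl⟩).2
      rw [Φ.bdryHigh x] at h
      simpa [pd1] using h.symm
    exact fun x => is_const_of_deriv_eq_zero hd hz x 0
  refine ⟨W 0 0, W 0 π, hlow, hhigh, ?_⟩
  set c0 := W 0 0
  set cπ := W 0 π
  -- continuity facts
  have cX : Continuous (unc Φ.X) := (hXs Φ).continuous
  have cY : Continuous (unc Φ.Y) := (hYs Φ).continuous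
  have cP : Continuous (unc (Pf Φ)) := (hPs Φ).continuous
  have cQ : Continuous (unc (Qf Φ)) := (hQs Φ).continuous
  have cP1 : Continuous (unc (pd1 (Pf Φ))) := (contDiff_pd1 (hPs Φ)).continuous
  have cP2 : Continuous (unc (pd2 (Pf Φ))) := (contDiff_pd2 (hPs Φ)).continuous
  have cQ1 : Continuous (unc (pd1 (Qf Φ))) := (contDiff_pd1 (hQs Φ)).continuous
  have cQ2 : Continuous (unc (pd2 (Qf Φ))) := (contDiff_pd2 (hQs Φ)).continuous
  have cQ12 : Continuous (unc (pd1 (pd2 (Qf Φ)))) :=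
    (contDiff_pd1 (contDiff_pd2 (hQs Φ))).continuous
  have cQ21 : Continuous (unc (pd2 (pd1 (Qf Φ)))) :=
    (contDiff_pd2 (contDiff_pd1 (hQs Φ))).continuous
  have cY2 : Continuous (unc (pd2 Φ.Y)) := (contDiff_pd2 (hYs Φ)).continuous
  -- Step 3: fiber integral
  have fiber : ∀ x : ℝ, (∫ y in (0:ℝ)..π,
      (Φ.X x y - x) * Real.sin (Φ.Y x y) * pd2 Φ.Y x y) = cπ - c0 := by
    intro x
    have hderiv : ∀ t ∈ Set.uIcc (0:ℝ) π, HasDerivAt (fun s => W x (Φ.Y x s))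
        ((Φ.X x t - x) * Real.sin (Φ.Y x t) * pd2 Φ.Y x t) t := by
      intro t ht
      rw [Set.uIcc_of_le pi_pos.le] at ht
      have h1 : HasDerivAt (fun s => Φ.Y x s) (pd2 Φ.Y x t) t := hasDerivAt_pd2 (hYs Φ) x t
      have h2 : HasDerivAt (fun u => W x u) (pd2 W x (Φ.Y x t)) (Φ.Y x t) :=
        hasDerivAt_pd2 hWsm x (Φ.Y x t)
      have h3 := h2.comp t h1
      rw [← (hWgen x t ht).1] at h3
      exact h3
    have hint : IntervalIntegrable
        (fun t => (Φ.X x t - x) * Real.sin (Φ.Y x t) * pd2 Φ.Y x t)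
        MeasureTheory.volume 0 π := by
      apply Continuous.intervalIntegrable
      exact (((cont_slice2 cX x).sub continuous_const).mul
        (Real.continuous_sin.comp (cont_slice2 cY x))).mul (cont_slice2 cY2 x)
    rw [intervalIntegral.integral_eq_sub_of_hasDerivAt hderiv hint]
    rw [Φ.bdryHigh x, Φ.bdryLow x, hhigh x, hlow x]
  -- Step B0
  have B0 : ∀ x : ℝ, (∫ y in (0:ℝ)..π, pd2 (Pf Φ) x y * pd1 (Qf Φ) x y) =
      - ∫ y in (0:ℝ)..π, Pf Φ x y * pd2 (pd1 (Qf Φ)) x y := by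
    intro x
    have hderiv : ∀ t ∈ Set.uIcc (0:ℝ) π, HasDerivAt (fun s => Pf Φ x s * pd1 (Qf Φ) x s)
        (pd2 (Pf Φ) x t * pd1 (Qf Φ) x t + Pf Φ x t * pd2 (pd1 (Qf Φ)) x t) t :=
      fun t _ => (hasDerivAt_pd2 (hPs Φ) x t).mul
        (hasDerivAt_pd2 (contDiff_pd1 (hQs Φ)) x t)
    have hint1 : IntervalIntegrable (fun t => pd2 (Pf Φ) x t * pd1 (Qf Φ) x t)
        MeasureTheory.volume 0 π :=
      (((cont_slice2 cP2 x).mul (cont_slice2 cQ1 x))).intervalIntegrable 0 π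
    have hint2 : IntervalIntegrable (fun t => Pf Φ x t * pd2 (pd1 (Qf Φ)) x t)
        MeasureTheory.volume 0 π :=
      (((cont_slice2 cP x).mul (cont_slice2 cQ21 x))).intervalIntegrable 0 π
    have hQ1low : pd1 (Qf Φ) x 0 = 0 := by
      have : (fun t => Qf Φ t 0) = fun _ : ℝ => (-1 : ℝ) := by
        funext t
        simp [Qf, Φ.bdryLow t]
      rw [show pd1 (Qf Φ) x 0 = deriv (fun t => Qf Φ t 0) x from rfl, this, deriv_const]
    have hQ1high : pd1 (Qf Φ) x π = 0 := by
      have : (fun t => Qf Φ t π) = fun _ : ℝ => (1 : ℝ) := by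
        funext t
        simp [Qf, Φ.bdryHigh t]
      rw [show pd1 (Qf Φ) x π = deriv (fun t => Qf Φ t π) x from rfl, this, deriv_const]
    have hFTC := intervalIntegral.integral_eq_sub_of_hasDerivAt hderiv (hint1.add hint2)
    rw [hQ1low, hQ1high, mul_zero, mul_zero, sub_zero] at hFTC
    rw [intervalIntegral.integral_add hint1 hint2] at hFTC
    linarith
  -- Step A0
  have A0 : ∀ y ∈ Set.Ioo (0:ℝ) π, (∫ x in (0:ℝ)..L,
      (pd1 (Pf Φ) x y * pd2 (Qf Φ) x y + Pf Φ x y * pd1 (pd2 (Qf Φ)) x y)) = 0 := by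
    intro y hy
    have hyIcc : y ∈ Set.Icc (0:ℝ) π := ⟨hy.1.le, hy.2.le⟩
    have hderiv : ∀ t ∈ Set.uIcc (0:ℝ) L, HasDerivAt (fun s => Pf Φ s y * pd2 (Qf Φ) s y)
        (pd1 (Pf Φ) t y * pd2 (Qf Φ) t y + Pf Φ t y * pd1 (pd2 (Qf Φ)) t y) t :=
      fun t _ => (hasDerivAt_pd1 (hPs Φ) t y).mul
        (hasDerivAt_pd1 (contDiff_pd2 (hQs Φ)) t y)
    have hint : IntervalIntegrable
        (fun t => pd1 (Pf Φ) t y * pd2 (Qf Φ) t y + Pf Φ t y * pd1 (pd2 (Qf Φ)) t y)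
        MeasureTheory.volume 0 L := by
      apply Continuous.intervalIntegrable
      exact ((cont_slice1 cP1 y).mul (cont_slice1 cQ2 y)).add
        ((cont_slice1 cP y).mul (cont_slice1 cQ12 y))
    rw [intervalIntegral.integral_eq_sub_of_hasDerivAt hderiv hint]
    have hPper : Pf Φ L y = Pf Φ 0 y := by
      have := Φ.periodicX 0 y hyIcc
      rw [zero_add] at this
      simp [Pf, this]
    have hQper : pd2 (Qf Φ) L y = pd2 (Qf Φ) 0 y := by
      have hev : (fun t => Qf Φ L t) =ᶠ[nhds y] (fun t => Qf Φ 0 t) := by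
        filter_upwards [Ioo_mem_nhds hy.1 hy.2] with t ht
        have := Φ.periodicY 0 t ⟨ht.1.le, ht.2.le⟩
        rw [zero_add] at this
        simp [Qf, this]
      exact hev.deriv_eq
    rw [hPper, hQper]
    ring
  -- the remainder function H
  set H : ℝ → ℝ → ℝ :=
    fun x y => pd1 (Pf Φ) x y * pd2 (Qf Φ) x y + Pf Φ x y * pd1 (pd2 (Qf Φ)) x y with hH
  have cH : Continuous (unc H) := by
    apply Continuous.add
    · exact cP1.mul cQ2
    · exact cP.mul cQ12
  -- inner integral identity: ∀ x
  have inner_eq : ∀ x : ℝ, (∫ y in (0:ℝ)..π, (Φ.X x y - x) * Real.sin y) =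
      (cπ - c0) + ∫ y in (0:ℝ)..π, H x y := by
    intro x
    have hcongr : (∫ y in (0:ℝ)..π, (Φ.X x y - x) * Real.sin y) =
        ∫ y in (0:ℝ)..π, ((Φ.X x y - x) * Real.sin (Φ.Y x y) * pd2 Φ.Y x y +
          (pd1 (Pf Φ) x y * pd2 (Qf Φ) x y - pd2 (Pf Φ) x y * pd1 (Qf Φ) x y)) := by
      apply intervalIntegral.integral_congr
      intro y hy
      rw [Set.uIcc_of_le pi_pos.le] at hy
      exact pointwise_identity Φ x hy
    have hi1 : IntervalIntegrable
        (fun y => (Φ.X x y - x) * Real.sin (Φ.Y x y) * pd2 Φ.Y x y)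
        MeasureTheory.volume 0 π := by
      apply Continuous.intervalIntegrable
      exact (((cont_slice2 cX x).sub continuous_const).mul
        (Real.continuous_sin.comp (cont_slice2 cY x))).mul (cont_slice2 cY2 x)
    have hi2 : IntervalIntegrable (fun y => pd1 (Pf Φ) x y * pd2 (Qf Φ) x y)
        MeasureTheory.volume 0 π :=
      ((cont_slice2 cP1 x).mul (cont_slice2 cQ2 x)).intervalIntegrable 0 π
    have hi3 : IntervalIntegrable (fun y => pd2 (Pf Φ) x y * pd1 (Qf Φ) x y)
        MeasureTheory.volume 0 π :=
      ((cont_slice2 cP2 x).mul (cont_slice2 cQ1 x)).intervalIntegrable 0 π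
    have hi4 : IntervalIntegrable (fun y => Pf Φ x y * pd2 (pd1 (Qf Φ)) x y)
        MeasureTheory.volume 0 π :=
      ((cont_slice2 cP x).mul (cont_slice2 cQ21 x)).intervalIntegrable 0 π
    rw [hcongr, intervalIntegral.integral_add hi1 (hi2.sub hi3),
      intervalIntegral.integral_sub hi2 hi3, fiber x, B0 x]
    have hclair : (∫ y in (0:ℝ)..π, Pf Φ x y * pd2 (pd1 (Qf Φ)) x y) =
        ∫ y in (0:ℝ)..π, Pf Φ x y * pd1 (pd2 (Qf Φ)) x y := by
      apply intervalIntegral.integral_congr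
      intro y _
      show Pf Φ x y * pd2 (pd1 (Qf Φ)) x y = Pf Φ x y * pd1 (pd2 (Qf Φ)) x y
      rw [clairaut (hQs Φ) x y]
    rw [hclair] at *
    have hsplit : (∫ y in (0:ℝ)..π, H x y) =
        (∫ y in (0:ℝ)..π, pd1 (Pf Φ) x y * pd2 (Qf Φ) x y) +
          ∫ y in (0:ℝ)..π, Pf Φ x y * pd1 (pd2 (Qf Φ)) x y := by
      rw [hH]
      exact intervalIntegral.integral_add hi2
        (((cont_slice2 cP x).mul (cont_slice2 cQ12 x)).intervalIntegrable 0 π)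
    rw [hsplit]
    ring
  -- Fubini: ∫₀^L (∫₀^π H) = 0
  set μ := MeasureTheory.volume.restrict (Set.Ioc (0:ℝ) L) with hμ
  set ν := MeasureTheory.volume.restrict (Set.Ioc (0:ℝ) π) with hν
  have hHint : MeasureTheory.Integrable (Function.uncurry H) (μ.prod ν) := by
    rw [hμ, hν, MeasureTheory.Measure.prod_restrict]
    have hcompact : IsCompact (Set.Icc (0:ℝ) L ×ˢ Set.Icc (0:ℝ) π) :=
      isCompact_Icc.prod isCompact_Icc
    have : MeasureTheory.IntegrableOn (Function.uncurry H)
        (Set.Icc (0:ℝ) L ×ˢ Set.Icc (0:ℝ) π)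
        (MeasureTheory.volume.prod MeasureTheory.volume) := by
      apply cH.continuousOn.integrableOn_compact hcompact
    exact MeasureTheory.IntegrableOn.mono_set this
      (Set.prod_mono Set.Ioc_subset_Icc_self Set.Ioc_subset_Icc_self)
  set G : ℝ → ℝ := fun x => ∫ y in (0:ℝ)..π, H x y with hG
  have hGν : ∀ x, G x = ∫ y, H x y ∂ν := by
    intro x
    show (∫ y in (0:ℝ)..π, H x y) = _
    rw [intervalIntegral.integral_of_le pi_pos.le]
  have hGint : IntervalIntegrable G MeasureTheory.volume 0 L := by
    rw [intervalIntegrable_iff_integrableOn_Ioc_of_le hL.le]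
    have := hHint.integral_prod_left
    apply this.congr
    filter_upwards with x
    exact (hGν x).symm
  have hGzero : (∫ x in (0:ℝ)..L, G x) = 0 := by
    rw [intervalIntegral.integral_of_le hL.le]
    have h1 : (∫ x in Set.Ioc (0:ℝ) L, G x ∂MeasureTheory.volume) =
        ∫ x, ∫ y, H x y ∂ν ∂μ := by
      rw [hμ]
      apply MeasureTheory.integral_congr_ae
      filter_upwards with x
      exact hGν x
    rw [h1, MeasureTheory.integral_integral_swap hHint]
    have h2 : (∫ y, ∫ x, H x y ∂μ ∂ν) =
        ∫ y in Set.Ioo (0:ℝ) π, (∫ x, H x y ∂μ) ∂MeasureTheory.volume := by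
      rw [hν, ← MeasureTheory.integral_Ioc_eq_integral_Ioo]
    rw [h2]
    have h3 : ∀ y ∈ Set.Ioo (0:ℝ) π, (∫ x, H x y ∂μ) = 0 := by
      intro y hy
      have : (∫ x, H x y ∂μ) = ∫ x in (0:ℝ)..L, H x y := by
        rw [hμ, intervalIntegral.integral_of_le hL.le]
      rw [this]
      exact A0 y hy
    rw [MeasureTheory.setIntegral_congr_fun measurableSet_Ioo h3]
    simp
  -- Assemble
  have Ieq : (∫ x in (0:ℝ)..L, ∫ y in (0:ℝ)..π, (Φ.X x y - x) * Real.sin y) =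
      L * (cπ - c0) := by
    have : (∫ x in (0:ℝ)..L, ∫ y in (0:ℝ)..π, (Φ.X x y - x) * Real.sin y) =
        ∫ x in (0:ℝ)..L, ((cπ - c0) + G x) := by
      apply intervalIntegral.integral_congr
      intro x _
      exact inner_eq x
    rw [this, intervalIntegral.integral_add (intervalIntegrable_const) hGint,
      hGzero, intervalIntegral.integral_const]
    simp
  rw [flux, Ieq]
  field_simp
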